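/- arXiv:1102.0630 — 2 statements merged into one kernel-verified Lean document; each statement's English description precedes it below -/
import Mathlib

section
/- The complex Zernike polynomials satisfy the orthogonality relation ∬_D V_{pq}(x,y) V*_{p'q'}(x,y) dx dy = (π/(p+1)) δ_{pp'} δ_{qq'} for admissible index pairs (p,q), (p',q'). -/
/-!
In polar coordinates the integrand splits into a radial factor times `exp (i (q - q') θ)`, and
the angular integral is `2π δ_{q q'}`. For `q = q'` write `p = 2n + m` with `m = |q|`. The moment
`∫₀¹ R ρ^(2s+m+1) dρ` of the radial polynomial is an alternating binomial sum
`∑ₗ (-1)^l C(n,l) P(l) / (D - l)`, where `D = n + m + s + 1` and `P(l) = (2n+m-l)! / (n+m-l)!`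
has degree `n`. Writing `P(l) / (D - l) = P(D) / (D - l) - Q(l)`, the polynomial `Q` of degree
`< n` is killed by the `n`-th forward difference, and `P(D) = 0` unless `s = n`. Hence `R` is
orthogonal to all lower powers, and its norm comes from
`∑ₗ (-1)^l C(n,l) / (D - l) = (-1)^n n! / ∏_{j ≤ n} (D - j)`.
-/

open MeasureTheory Complex Real

noncomputable section

def Disc : Set ℂ := Metric.closedBall 0 1

def muD : Measure ℂ := volume.restrict Disc

def reflPt (β : ℝ) (z : ℂ) : ℂ := Complex.exp (2 * β * Complex.I) * (starRingEnd ℂ) z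

def reflFun (β : ℝ) (f : ℂ → ℂ) : ℂ → ℂ := fun z => f (reflPt β z)

def Rz (p : ℕ) (q : ℤ) (ρ : ℝ) : ℝ :=
  ∑ l ∈ Finset.range ((p - q.natAbs) / 2 + 1),
    (-1 : ℝ) ^ l * (Nat.factorial (p - l)) * ρ ^ (p - 2 * l) /
      ((Nat.factorial l) * (Nat.factorial ((p + q.natAbs) / 2 - l)) *
        (Nat.factorial ((p - q.natAbs) / 2 - l)))

def Vz (p : ℕ) (q : ℤ) (z : ℂ) : ℂ :=
  (Rz p q ‖z‖ : ℂ) * Complex.exp ((q : ℂ) * (Complex.arg z) * Complex.I)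

def Zmom (p : ℕ) (q : ℤ) (f : ℂ → ℂ) : ℂ :=
  ∫ z in Disc, f z * (starRingEnd ℂ) (Vz p q z)

def Admissible (p : ℕ) (q : ℤ) : Prop := q.natAbs ≤ p ∧ (p - q.natAbs) % 2 = 0


open Finset Polynomial
open scoped fwdDiff Nat

-- `(Δ_[1])^[n]` needs the parentheses: `]^` is a token of Mathlib's exterior-power notation.
lemma sum_neg_one_pow_mul_choose_mul_eq_fwdDiff_iter {R : Type*} [CommRing R] (f : R → R)
    (n : ℕ) :
    ∑ l ∈ range (n + 1), (-1) ^ l * n.choose l * f l = (-1) ^ n * (Δ_[1])^[n] f 0 := by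
  rw [fwdDiff_iter_eq_sum_shift, mul_sum]
  refine sum_congr rfl fun l hl => ?_
  have hsign : (-1 : R) ^ n = (-1) ^ (n - l) * (-1) ^ l := by
    rw [← pow_add, Nat.sub_add_cancel (mem_range_succ_iff.mp hl)]
  simp only [zsmul_eq_mul, Int.cast_mul, Int.cast_pow, Int.cast_neg, Int.cast_one,
    Int.cast_natCast, nsmul_eq_mul, mul_one, zero_add, hsign]
  have hsq : ((-1 : R) ^ (n - l)) ^ 2 = 1 := by rw [← pow_mul, pow_mul', neg_one_sq, one_pow]
  linear_combination (-(-1 : R) ^ l * n.choose l * f l) * hsq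

lemma fwdDiff_iter_inv_sub {K : Type*} [Field K] (x : K) (n : ℕ) (y : K)
    (hx : (descPochhammer K (n + 1)).eval (x - y) ≠ 0) :
    (Δ_[1])^[n] (fun t => (x - t)⁻¹) y = n ! / (descPochhammer K (n + 1)).eval (x - y) := by
  induction n generalizing y with
  | zero => simp
  | succ n ih =>
    have hright := descPochhammer_succ_eval (n + 1) (x - y)
    have hleft : (descPochhammer K (n + 1 + 1)).eval (x - y)
        = (x - y) * (descPochhammer K (n + 1)).eval (x - (y + 1)) := by
      rw [descPochhammer_succ_left, eval_mul, eval_X, eval_comp, eval_sub, eval_X, eval_one,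
        sub_add_eq_sub_sub]
    obtain ⟨hB, hxn⟩ := mul_ne_zero_iff.mp (hright ▸ hx)
    obtain ⟨hxy, hA⟩ := mul_ne_zero_iff.mp (hleft ▸ hx)
    rw [Function.iterate_succ_apply', fwdDiff, ih y hB, ih (y + 1) hA, Nat.factorial_succ]
    have hrel := hleft.symm.trans hright
    rw [hleft]
    field_simp
    push_cast at hrel ⊢
    linear_combination -(n ! : K) * hrel

lemma sum_neg_one_pow_mul_choose_mul_eval_eq_zero {R : Type*} [CommRing R] {P : R[X]} {n : ℕ}
    (hP : P.degree < n) : ∑ l ∈ range (n + 1), (-1) ^ l * n.choose l * P.eval (l : R) = 0 := by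
  rcases eq_or_ne P 0 with rfl | hP0
  · simp
  rw [sum_neg_one_pow_mul_choose_mul_eq_fwdDiff_iter P.eval,
    fwdDiff_iter_eq_zero_of_degree_lt ((natDegree_lt_iff_degree_lt hP0).mpr hP), Pi.zero_apply,
    mul_zero]

lemma sum_neg_one_pow_mul_choose_mul_inv_sub {K : Type*} [Field K] (n : ℕ) (x : K)
    (hx : (descPochhammer K (n + 1)).eval x ≠ 0) :
    ∑ l ∈ range (n + 1), (-1) ^ l * n.choose l * (x - l)⁻¹
      = (-1) ^ n * n ! / (descPochhammer K (n + 1)).eval x := by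
  rw [sum_neg_one_pow_mul_choose_mul_eq_fwdDiff_iter (fun t => (x - t)⁻¹),
    fwdDiff_iter_inv_sub x n 0 (by rwa [sub_zero]), sub_zero, mul_div_assoc]

lemma sum_neg_one_pow_mul_choose_mul_eval_div_sub {K : Type*} [Field K] {P : K[X]} {n : ℕ}
    (hP : P.natDegree ≤ n) (x : K) (hx : (descPochhammer K (n + 1)).eval x ≠ 0) :
    ∑ l ∈ range (n + 1), (-1) ^ l * n.choose l * (P.eval (l : K) / (x - l))
      = P.eval x * ((-1) ^ n * n ! / (descPochhammer K (n + 1)).eval x) := by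
  set Q := (P - C (P.eval x)) /ₘ (X - C x)
  have hQ : (X - C x) * Q = P - C (P.eval x) := mul_divByMonic_eq_iff_isRoot.mpr (by simp)
  have hQdeg : Q.degree < n := by
    by_cases h0 : P - C (P.eval x) = 0
    · simp [Q, h0]
    refine (degree_divByMonic_lt _ _ h0 (by simp)).trans_le ?_
    exact degree_sub_le _ _ |>.trans
      (max_le (degree_le_of_natDegree_le hP) (degree_C_le.trans (by exact_mod_cast n.zero_le)))
  have hxl : ∀ l ∈ range (n + 1), x - l ≠ 0 := by
    rw [descPochhammer_eval_eq_prod_range, prod_ne_zero_iff] at hx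
    exact hx
  have hterm : ∀ l ∈ range (n + 1), (-1) ^ l * n.choose l * (P.eval (l : K) / (x - l))
      = P.eval x * ((-1) ^ l * n.choose l * (x - l)⁻¹)
        - (-1) ^ l * n.choose l * Q.eval (l : K) := by
    intro l hl
    have hQl := congr_arg (Polynomial.eval (l : K)) hQ
    simp only [eval_mul, eval_sub, eval_X, eval_C] at hQl
    have := hxl l hl
    field_simp
    linear_combination -(n.choose l : K) * hQl
  rw [sum_congr rfl hterm, sum_sub_distrib, ← mul_sum,
    sum_neg_one_pow_mul_choose_mul_inv_sub n x hx,
    sum_neg_one_pow_mul_choose_mul_eval_eq_zero hQdeg, sub_zero]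

def zernikeRadialCoeff (n m l : ℕ) : ℝ :=
  (-1) ^ l * (2 * n + m - l)! / (l ! * (n + m - l)! * (n - l)!)

def zernikeRadial (n m : ℕ) (ρ : ℝ) : ℝ :=
  ∑ l ∈ range (n + 1), zernikeRadialCoeff n m l * ρ ^ (2 * (n - l) + m)

lemma zernikeRadialCoeff_eq {n l : ℕ} (m : ℕ) (hl : l ≤ n) :
    zernikeRadialCoeff n m l = (-1) ^ l * n.choose l
      * ((descPochhammer ℝ n).comp (C ((2 * n + m : ℕ) : ℝ) - X)).eval (l : ℝ) / n ! := by
  have hfac : ((n + m - l)! : ℝ) * (2 * n + m - l).descFactorial n = (2 * n + m - l)! := by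
    have := Nat.factorial_mul_descFactorial (show n ≤ 2 * n + m - l by omega)
    rw [show 2 * n + m - l - n = n + m - l by omega] at this
    exact_mod_cast this
  rw [eval_comp, eval_sub, eval_C, eval_X, ← Nat.cast_sub (by omega),
    descPochhammer_eval_eq_descFactorial, Nat.cast_choose ℝ hl, zernikeRadialCoeff, ← hfac]
  field_simp

lemma integral_zernikeRadial_mul_pow_eq_sum (n m k : ℕ) :
    ∫ ρ in (0 : ℝ)..1, zernikeRadial n m ρ * ρ ^ k
      = ∑ l ∈ range (n + 1),
          zernikeRadialCoeff n m l / ((2 * (n - l) + m + k + 1 : ℕ) : ℝ) := by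
  simp_rw [zernikeRadial, sum_mul, mul_assoc, ← pow_add]
  rw [intervalIntegral.integral_finsetSum fun l _ =>
    Continuous.intervalIntegrable (by fun_prop) _ _]
  refine sum_congr rfl fun l _ => ?_
  rw [intervalIntegral.integral_const_mul, integral_pow]
  simp [div_eq_mul_inv, add_assoc]

lemma integral_zernikeRadial_mul_pow {n s : ℕ} (m : ℕ) (hs : s ≤ n) :
    ∫ ρ in (0 : ℝ)..1, zernikeRadial n m ρ * ρ ^ (2 * s + m + 1)
      = if s = n then (n ! * (n + m)! : ℝ) / (2 * (2 * n + m + 1)!) else 0 := by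
  set P := (descPochhammer ℝ n).comp (C ((2 * n + m : ℕ) : ℝ) - X)
  set D : ℝ := n + m + s + 1 with hD_def
  have hPdeg : P.natDegree ≤ n := by
    refine natDegree_comp_le.trans ?_
    rw [descPochhammer_natDegree]
    refine (Nat.mul_le_mul_left n ((natDegree_sub_le _ _).trans ?_)).trans_eq (mul_one n)
    exact max_le ((natDegree_C _).trans_le zero_le_one) natDegree_X_le
  have hDl : ∀ l ≤ n, (0 : ℝ) < D - l := fun l hl => by
    have : (l : ℝ) ≤ n := by exact_mod_cast hl
    rw [hD_def]; linarith [(m.cast_nonneg : (0 : ℝ) ≤ m), (s.cast_nonneg : (0 : ℝ) ≤ s)]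
  have hD : (descPochhammer ℝ (n + 1)).eval D ≠ 0 :=
    (descPochhammer_pos (by push_cast; linarith [hDl n le_rfl])).ne'
  have hterm : ∀ l ∈ range (n + 1),
      zernikeRadialCoeff n m l / ((2 * (n - l) + m + (2 * s + m + 1) + 1 : ℕ) : ℝ)
        = (2 * n ! : ℝ)⁻¹ * ((-1) ^ l * n.choose l * (P.eval (l : ℝ) / (D - l))) := by
    intro l hl
    have hl' : l ≤ n := mem_range_succ_iff.mp hl
    have hden : ((2 * (n - l) + m + (2 * s + m + 1) + 1 : ℕ) : ℝ) = 2 * (D - l) := by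
      push_cast [Nat.cast_sub hl']; ring
    have := (hDl l hl').ne'
    rw [hden, zernikeRadialCoeff_eq m hl']
    field_simp
    rfl
  rw [integral_zernikeRadial_mul_pow_eq_sum, sum_congr rfl hterm, ← mul_sum,
    sum_neg_one_pow_mul_choose_mul_eval_div_sub hPdeg D hD]
  have hPD : P.eval D = (descPochhammer ℝ n).eval ((n : ℝ) - s - 1) := by
    simp only [P, eval_comp, eval_sub, eval_C, eval_X, D]; push_cast; ring_nf
  split_ifs with hsn
  · subst hsn
    have hPD' : P.eval D = (-1) ^ s * s ! := by
      rw [hPD, show (s : ℝ) - s - 1 = -1 by ring, descPochhammer_eval_eq_ascPochhammer,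
        show (-1 : ℝ) - s + 1 = -(s : ℝ) by ring, ascPochhammer_eval_neg_eq_descPochhammer,
        descPochhammer_eval_eq_descFactorial, Nat.descFactorial_self]
    have hfac : ((s + m)! : ℝ) * (descPochhammer ℝ (s + 1)).eval D = (2 * s + m + 1)! := by
      have := Nat.factorial_mul_descFactorial (show s + 1 ≤ 2 * s + m + 1 by omega)
      rw [show 2 * s + m + 1 - (s + 1) = s + m by omega] at this
      rw [show D = ((2 * s + m + 1 : ℕ) : ℝ) by push_cast; ring,
        descPochhammer_eval_eq_descFactorial]
      exact_mod_cast this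
    have hsign : ((-1 : ℝ) ^ s) ^ 2 = 1 := by rw [← pow_mul, pow_mul', neg_one_sq, one_pow]
    rw [hPD', ← hfac]
    field_simp
    linear_combination hsign
  · have hcast : ((n - s - 1 : ℕ) : ℝ) = n - s - 1 := by
      rw [Nat.cast_sub (by omega), Nat.cast_sub hs, Nat.cast_one]
    rw [hPD, ← hcast, descPochhammer_eval_coe_nat_of_lt (by omega), zero_mul, mul_zero]

@[fun_prop]
lemma continuous_zernikeRadial (n m : ℕ) : Continuous (zernikeRadial n m) := by
  unfold zernikeRadial; fun_prop

lemma integral_zernikeRadial_mul_zernikeRadial (n n' m : ℕ) :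
    ∫ ρ in (0 : ℝ)..1, zernikeRadial n m ρ * zernikeRadial n' m ρ * ρ
      = if n = n' then 1 / (2 * (2 * (n : ℝ) + m + 1)) else 0 := by
  wlog h : n' ≤ n generalizing n n'
  · simp_rw [mul_comm (zernikeRadial n m _) (zernikeRadial n' m _)]
    rw [this n' n (by omega), if_neg (by omega), if_neg (by omega)]
  have hexpand : ∀ ρ : ℝ, zernikeRadial n m ρ * zernikeRadial n' m ρ * ρ
      = ∑ l ∈ range (n' + 1),
          zernikeRadialCoeff n' m l * (zernikeRadial n m ρ * ρ ^ (2 * (n' - l) + m + 1)) := by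
    intro ρ
    rw [zernikeRadial.eq_1 n', mul_sum, sum_mul]
    exact sum_congr rfl fun l _ => by ring
  simp_rw [hexpand]
  rw [intervalIntegral.integral_finsetSum fun l _ =>
    Continuous.intervalIntegrable (by fun_prop) _ _]
  simp_rw [intervalIntegral.integral_const_mul]
  rw [sum_congr rfl fun l _ => by rw [integral_zernikeRadial_mul_pow m ((n'.sub_le l).trans h)]]
  rcases h.lt_or_eq with hlt | rfl
  · rw [if_neg hlt.ne', sum_eq_zero fun l _ => by rw [if_neg (by omega), mul_zero]]
  · rw [sum_eq_single 0 (fun l hl hl0 => by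
        rw [if_neg (by have := mem_range.mp hl; omega), mul_zero]) (by simp),
      if_pos (Nat.sub_zero _), if_pos rfl, zernikeRadialCoeff, Nat.factorial_succ]
    simp only [Nat.sub_zero]
    push_cast
    field_simp
    ring

lemma Admissible.exists_eq_two_mul_add {p : ℕ} {q : ℤ} (h : Admissible p q) :
    ∃ n, p = 2 * n + q.natAbs :=
  ⟨(p - q.natAbs) / 2, by have := h.1; have := h.2; omega⟩

lemma Rz_two_mul_add_natAbs (n : ℕ) (q : ℤ) :
    Rz (2 * n + q.natAbs) q = zernikeRadial n q.natAbs := by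
  funext ρ
  refine sum_congr (by congr 2; omega) fun l hl => ?_
  have hl' : l ≤ n := by have := mem_range.mp hl; omega
  rw [zernikeRadialCoeff, show 2 * n + q.natAbs - 2 * l = 2 * (n - l) + q.natAbs by omega,
    show (2 * n + q.natAbs + q.natAbs) / 2 - l = n + q.natAbs - l by omega,
    show (2 * n + q.natAbs - q.natAbs) / 2 - l = n - l by omega]
  ring

lemma integral_closedBall_norm_mul_arg (f : ℝ → ℝ) (g : ℝ → ℂ) {r : ℝ} (hr : 0 ≤ r) :
    ∫ z in Metric.closedBall (0 : ℂ) r, (f ‖z‖ : ℂ) * g (arg z)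
      = ((∫ ρ in (0 : ℝ)..r, f ρ * ρ : ℝ) : ℂ) * ∫ θ in -π..π, g θ := by
  set F : ℝ → ℝ := (Set.Ioc 0 r).indicator fun ρ => f ρ * ρ with hF
  have hpolar : ∀ p ∈ polarCoord.target,
      p.1 • (Metric.closedBall 0 r).indicator (fun z => (f ‖z‖ : ℂ) * g (arg z))
          (Complex.polarCoord.symm p)
        = (F p.1 : ℂ) * g p.2 := by
    intro p hp
    rw [hF]
    set z := Complex.polarCoord.symm p
    have hz : Complex.polarCoord z = p := Complex.polarCoord.right_inv hp
    obtain ⟨hnorm, harg⟩ := Prod.ext_iff.mp ((Complex.polarCoord_apply z).symm.trans hz)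
    dsimp only at hnorm harg
    by_cases hpr : p.1 ≤ r
    · rw [Set.indicator_of_mem (by rwa [Metric.mem_closedBall, dist_zero_right, hnorm]),
        Set.indicator_of_mem (Set.mem_Ioc.mpr ⟨hp.1, hpr⟩), hnorm, harg, Complex.real_smul]
      push_cast
      ring
    · rw [Set.indicator_of_notMem (by rwa [Metric.mem_closedBall, dist_zero_right, hnorm]),
        Set.indicator_of_notMem (fun h => hpr h.2), smul_zero, ofReal_zero, zero_mul]
  rw [← integral_indicator Metric.isClosed_closedBall.measurableSet,
    ← Complex.integral_comp_polarCoord_symm, setIntegral_congr_fun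
      polarCoord.open_target.measurableSet hpolar, polarCoord_target, Measure.volume_eq_prod,
    setIntegral_prod_mul (fun ρ => (F ρ : ℂ)) g, integral_complex_ofReal, hF,
    setIntegral_indicator measurableSet_Ioc,
    Set.inter_eq_self_of_subset_right Set.Ioc_subset_Ioi_self, intervalIntegral.integral_of_le hr,
    intervalIntegral.integral_of_le (by linarith [pi_pos]), integral_Ioc_eq_integral_Ioo (x := -π)]

lemma integral_exp_int_mul_I (k : ℤ) :
    ∫ θ in -π..π, Complex.exp (k * θ * I) = if k = 0 then (2 * π : ℂ) else 0 := by
  split_ifs with hk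
  · simp [hk]; ring
  have hc : (k : ℂ) * I ≠ 0 := mul_ne_zero (Int.cast_ne_zero.mpr hk) I_ne_zero
  simp_rw [mul_right_comm _ _ I]
  rw [integral_exp_mul_complex hc, div_eq_zero_iff, sub_eq_zero]
  exact Or.inl (exp_eq_exp_iff_exists_int.mpr ⟨k, by push_cast; ring⟩)

lemma Vz_mul_conj_Vz (p p' : ℕ) (q q' : ℤ) (z : ℂ) :
    Vz p q z * (starRingEnd ℂ) (Vz p' q' z)
      = ((Rz p q ‖z‖ * Rz p' q' ‖z‖ : ℝ) : ℂ)
        * Complex.exp ((q - q' : ℤ) * arg z * I) := by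
  rw [Vz, Vz, map_mul, conj_ofReal, ← exp_conj, mul_mul_mul_comm, ← Complex.exp_add]
  simp only [map_mul, map_intCast, conj_ofReal, conj_I]
  push_cast
  ring_nf

theorem stmt5 (p p' : ℕ) (q q' : ℤ) (h : Admissible p q) (h' : Admissible p' q') :
    ∫ z in Disc, Vz p q z * (starRingEnd ℂ) (Vz p' q' z)
      = if p = p' ∧ q = q' then (π / (p + 1) : ℂ) else 0 := by
  obtain ⟨n, rfl⟩ := h.exists_eq_two_mul_add
  obtain ⟨n', rfl⟩ := h'.exists_eq_two_mul_add
  simp_rw [Vz_mul_conj_Vz, Rz_two_mul_add_natAbs]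
  refine (integral_closedBall_norm_mul_arg
    (fun ρ => zernikeRadial n q.natAbs ρ * zernikeRadial n' q'.natAbs ρ)
    (fun θ => Complex.exp ((q - q' : ℤ) * θ * I)) zero_le_one).trans ?_
  rw [integral_exp_int_mul_I]
  rcases eq_or_ne q q' with rfl | hq
  · rw [integral_zernikeRadial_mul_zernikeRadial, if_pos (sub_self q)]
    rcases eq_or_ne n n' with rfl | hn
    · rw [if_pos rfl, if_pos ⟨rfl, rfl⟩]
      push_cast
      field_simp
    · rw [if_neg hn, if_neg (fun h => hn (by omega)), ofReal_zero, zero_mul]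
  · rw [if_neg (sub_ne_zero.mpr hq), if_neg (fun h => hq h.2), mul_zero]
end
end

section
/- For every admissible pair (p,q), the squared L² norm of the Zernike polynomial on the unit disc is ‖V_{pq}‖² = π/(p+1). -/
open MeasureTheory Complex Real

noncomputable section

/-!
Write `a = |q|`, `n = (p - a) / 2` and `x = ρ²`. Then `R_{pq}(ρ) = ρ^a Q(ρ²)` for a polynomial `Q`
of degree `n` satisfying the Rodrigues formula `n! x^a Q(x) = dⁿ/dxⁿ [x^(n+a) (x-1)ⁿ]`.
Polar coordinates turn `‖V_{pq}‖²` into `π ∫₀¹ x^a Q(x)² dx`. Integrating by parts `n` times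
moves the derivatives onto `Q` (the boundary terms vanish since `x^(n+a) (x-1)ⁿ` has zeros of
order `n` at both ends), and `Q⁽ⁿ⁾` is the constant `(2n+a)!/(n+a)!`; what remains is the Beta
integral `∫₀¹ x^(n+a) (1-x)ⁿ dx = (n+a)! n! / (2n+a+1)!`, so the total is `π / (2n+a+1) = π/(p+1)`.
-/

open Polynomial Set Nat

theorem integral_pow_mul_one_sub_pow (m n : ℕ) :
    ∫ x in (0 : ℝ)..1, x ^ m * (1 - x) ^ n = (m ! * n ! : ℝ) / (m + n + 1)! := by
  have hbeta := Complex.betaIntegral_eq_Gamma_mul_div (m + 1) (n + 1)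
    (by norm_cast; positivity) (by norm_cast; positivity)
  rw [show (m + 1 : ℂ) + (n + 1) = ((m + n + 1 : ℕ) : ℂ) + 1 by push_cast; ring,
    Complex.Gamma_nat_eq_factorial, Complex.Gamma_nat_eq_factorial,
    Complex.Gamma_nat_eq_factorial, Complex.betaIntegral] at hbeta
  simp only [add_sub_cancel_right, Complex.cpow_natCast] at hbeta
  have hofReal := (intervalIntegral.integral_ofReal (a := 0) (b := 1) (μ := volume)
    (f := fun x : ℝ => x ^ m * (1 - x) ^ n)).symm
  push_cast at hofReal
  exact Complex.ofReal_injective (by push_cast; exact hofReal.trans hbeta)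

theorem setIntegral_disc_comp_norm (g : ℝ → ℝ) :
    ∫ z in Disc, g ‖z‖ = 2 * π * ∫ r in (0 : ℝ)..1, r * g r := by
  have hDisc : Disc = (‖·‖) ⁻¹' Iic 1 := by ext z; simp [Disc]
  have hradial : ∀ r : ℝ,
      r ^ (2 - 1) • (Iic 1).indicator g r = (Iic 1).indicator (fun r => r * g r) r := by
    intro r
    by_cases hr : r ∈ Iic (1 : ℝ) <;> simp [hr]
  rw [hDisc, ← integral_indicator (measurableSet_Iic.preimage measurable_norm),
    show ((‖·‖) ⁻¹' Iic 1).indicator (fun z : ℂ => g ‖z‖) = fun z => (Iic 1).indicator g ‖z‖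
      from funext fun z => indicator_comp_right (g := g) (‖·‖),
    integral_fun_norm_addHaar volume ((Iic 1).indicator g), Complex.finrank_real_complex]
  simp_rw [hradial]
  rw [setIntegral_indicator measurableSet_Iic, Ioi_inter_Iic,
    ← intervalIntegral.integral_of_le zero_le_one]
  simp only [measureReal_def, Complex.volume_ball, ENNReal.ofReal_one, one_pow, one_mul,
    ENNReal.coe_toReal, NNReal.coe_real_pi, smul_eq_mul, nsmul_eq_mul, cast_ofNat]
  ring

theorem integral_mul_comp_sq (g : ℝ → ℝ) (hg : Continuous g) :
    ∫ r in (0 : ℝ)..1, r * g (r ^ 2) = (∫ x in (0 : ℝ)..1, g x) / 2 := by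
  have hsubst := intervalIntegral.integral_comp_mul_deriv (a := 0) (b := 1)
    (f := fun r => r ^ 2) (f' := fun r => 2 * r) (fun r _ => by simpa using hasDerivAt_pow 2 r)
    (by fun_prop) hg
  rw [zero_pow two_ne_zero, one_pow] at hsubst
  simp only [Function.comp_def] at hsubst
  rw [← hsubst, ← intervalIntegral.integral_div]
  congr 1 with r
  ring

theorem setIntegral_disc_comp_norm_sq (g : ℝ → ℝ) (hg : Continuous g) :
    ∫ z in Disc, g (‖z‖ ^ 2) = π * ∫ x in (0 : ℝ)..1, g x := by
  rw [setIntegral_disc_comp_norm (fun r => g (r ^ 2)), integral_mul_comp_sq g hg]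
  ring

namespace Polynomial

theorem isRoot_iterate_derivative_of_pow_dvd {R : Type*} [CommRing R] {p : R[X]} {t : R}
    {k i : ℕ} (h : (X - C t) ^ k ∣ p) (hi : i < k) : (derivative^[i] p).IsRoot t :=
  dvd_iff_isRoot.mp <| (dvd_pow_self _ (Nat.sub_ne_zero_of_lt hi)).trans
    (pow_sub_dvd_iterate_derivative_of_pow_dvd i h)

theorem integral_eval_mul_iterate_derivative {a b : ℝ} (F : ℝ[X]) (n : ℕ)
    (hF : ∀ i < n, (derivative^[i] F).IsRoot a ∧ (derivative^[i] F).IsRoot b) (G : ℝ[X]) :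
    ∫ x in a..b, G.eval x * (derivative^[n] F).eval x =
      (-1) ^ n * ∫ x in a..b, (derivative^[n] G).eval x * F.eval x := by
  induction n generalizing G with
  | zero => simp
  | succ n ih =>
    have parts := intervalIntegral.integral_mul_deriv_eq_deriv_mul (a := a) (b := b)
      (fun x _ => G.hasDerivAt x) (fun x _ => (derivative^[n] F).hasDerivAt x)
      (G.derivative.continuous.intervalIntegrable _ _)
      ((derivative (derivative^[n] F)).continuous.intervalIntegrable _ _)
    rw [Function.iterate_succ_apply', parts, (hF n n.lt_succ_self).1, (hF n n.lt_succ_self).2,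
      mul_zero, mul_zero, sub_zero, zero_sub, ih (fun i hi => hF i (by omega)),
      Function.iterate_succ_apply, pow_succ]
    ring

end Polynomial

def zernikeRadialPoly (n a : ℕ) : ℝ[X] :=
  ∑ l ∈ Finset.range (n + 1),
    C ((-1 : ℝ) ^ l * (2 * n + a - l)! / (l ! * (n + a - l)! * (n - l)!)) * X ^ (n - l)

theorem Rz_eq_eval_zernikeRadialPoly (n : ℕ) (q : ℤ) (ρ : ℝ) :
    Rz (2 * n + q.natAbs) q ρ = ρ ^ q.natAbs * (zernikeRadialPoly n q.natAbs).eval (ρ ^ 2) := by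
  rw [Rz, zernikeRadialPoly, eval_finsetSum, Finset.mul_sum,
    show (2 * n + q.natAbs - q.natAbs) / 2 = n by omega,
    show (2 * n + q.natAbs + q.natAbs) / 2 = n + q.natAbs by omega]
  refine Finset.sum_congr rfl fun l hl => ?_
  rw [show 2 * n + q.natAbs - 2 * l = q.natAbs + 2 * (n - l) by
    have := Finset.mem_range.mp hl; omega]
  simp only [eval_mul, eval_C, eval_pow, eval_X, pow_add, pow_mul]
  ring

theorem iterate_derivative_X_pow_mul_X_sub_one_pow (n a : ℕ) :
    derivative^[n] ((X : ℝ[X]) ^ (n + a) * (X - 1) ^ n) =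
      C (n ! : ℝ) * X ^ a * zernikeRadialPoly n a := by
  have hexpand : (X : ℝ[X]) ^ (n + a) * (X - 1) ^ n =
      ∑ l ∈ Finset.range (n + 1), C ((-1) ^ l * (n.choose l : ℝ)) * X ^ (2 * n + a - l) := by
    rw [sub_pow, Finset.mul_sum, ← Finset.sum_range_reflect]
    refine Finset.sum_congr rfl fun l hl => ?_
    have hl := Finset.mem_range.mp hl
    rw [show n + 1 - 1 - l = n - l by omega, Nat.choose_symm (by omega),
      show 2 * n + a - l = (n + a) + (n - l) by omega, pow_add,
      show n - l + n = l + 2 * (n - l) by omega, pow_add, pow_mul]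
    simp only [one_pow, mul_one, map_mul, map_pow, map_neg, map_one, map_natCast, neg_one_sq]
    ring
  rw [hexpand, iterate_derivative_sum, zernikeRadialPoly, Finset.mul_sum]
  refine Finset.sum_congr rfl fun l hl => ?_
  have hl := Finset.mem_range.mp hl
  rw [iterate_derivative_C_mul, iterate_derivative_X_pow_eq_C_mul,
    show 2 * n + a - l - n = a + (n - l) by omega, pow_add]
  have hchoose : (n.choose l * l ! * (n - l)! : ℝ) = n ! := by
    exact_mod_cast Nat.choose_mul_factorial_mul_factorial (by omega)
  have hdesc : ((n + a - l)! * (2 * n + a - l).descFactorial n : ℝ) = (2 * n + a - l)! := by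
    rw [← Nat.factorial_mul_descFactorial (show n ≤ 2 * n + a - l by omega),
      show 2 * n + a - l - n = n + a - l by omega]
    push_cast
    ring
  have hcoef : (-1 : ℝ) ^ l * n.choose l * (2 * n + a - l).descFactorial n =
      n ! * ((-1) ^ l * (2 * n + a - l)! / (l ! * (n + a - l)! * (n - l)!)) := by
    rw [← hchoose, ← hdesc]
    field_simp
  rw [← mul_assoc, ← C_mul, hcoef, C_mul]
  ring

theorem iterate_derivative_zernikeRadialPoly (n a : ℕ) :
    derivative^[n] (zernikeRadialPoly n a) = C ((2 * n + a)! / (n + a)! : ℝ) := by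
  rw [zernikeRadialPoly, iterate_derivative_sum, Finset.sum_eq_single 0]
  · simp only [iterate_derivative_C_mul, iterate_derivative_X_pow_eq_C_mul, Nat.sub_zero,
      Nat.descFactorial_self, Nat.sub_self, pow_zero, mul_one, ← C_mul, Nat.factorial_zero,
      Nat.cast_one, one_mul]
    congr 1
    field_simp
  · intro l hl hl0
    have := Finset.mem_range.mp hl
    rw [iterate_derivative_C_mul, iterate_derivative_X_pow_eq_C_mul,
      (Nat.descFactorial_eq_zero_iff_lt).mpr (by omega)]
    simp
  · simp

theorem integral_pow_mul_eval_zernikeRadialPoly_sq (n a : ℕ) :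
    ∫ x in (0 : ℝ)..1, x ^ a * (zernikeRadialPoly n a).eval x ^ 2 = 1 / (2 * n + a + 1) := by
  set F : ℝ[X] := X ^ (n + a) * (X - 1) ^ n with hF
  have hroots : ∀ i < n, (derivative^[i] F).IsRoot 0 ∧ (derivative^[i] F).IsRoot 1 := by
    refine fun i hi => ⟨isRoot_iterate_derivative_of_pow_dvd ?_ hi,
      isRoot_iterate_derivative_of_pow_dvd ?_ hi⟩
    · rw [map_zero, sub_zero]
      exact (pow_dvd_pow X (Nat.le_add_right n a)).mul_right _
    · rw [map_one]
      exact dvd_mul_left _ _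
  have hrodrigues : ∀ x : ℝ, x ^ a * (zernikeRadialPoly n a).eval x ^ 2 =
      (n ! : ℝ)⁻¹ * ((zernikeRadialPoly n a).eval x * (derivative^[n] F).eval x) := by
    intro x
    rw [hF, iterate_derivative_X_pow_mul_X_sub_one_pow]
    simp only [eval_mul, eval_C, eval_pow, eval_X]
    field_simp
  have hFeval : ∀ x : ℝ, F.eval x = (-1) ^ n * (x ^ (n + a) * (1 - x) ^ n) := by
    intro x
    simp only [hF, eval_mul, eval_pow, eval_X, eval_sub, eval_one]
    rw [← neg_sub, neg_pow]
    ring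
  calc ∫ x in (0 : ℝ)..1, x ^ a * (zernikeRadialPoly n a).eval x ^ 2
      = (n ! : ℝ)⁻¹ *
          ∫ x in (0 : ℝ)..1, (zernikeRadialPoly n a).eval x * (derivative^[n] F).eval x := by
        simp_rw [hrodrigues, intervalIntegral.integral_const_mul]
    _ = (n ! : ℝ)⁻¹ * ((-1) ^ n *
          ∫ x in (0 : ℝ)..1, (derivative^[n] (zernikeRadialPoly n a)).eval x * F.eval x) := by
        rw [integral_eval_mul_iterate_derivative F n hroots (zernikeRadialPoly n a)]
    _ = (n ! : ℝ)⁻¹ * ((2 * n + a)! / (n + a)!) *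
          ∫ x in (0 : ℝ)..1, x ^ (n + a) * (1 - x) ^ n := by
        simp_rw [iterate_derivative_zernikeRadialPoly, eval_C, hFeval,
          intervalIntegral.integral_const_mul]
        have hsign : ((-1 : ℝ) ^ n) ^ 2 = 1 := by rw [← pow_mul, pow_mul', neg_one_sq, one_pow]
        linear_combination (n ! : ℝ)⁻¹ * ((2 * n + a)! / (n + a)!) *
          (∫ x in (0 : ℝ)..1, x ^ (n + a) * (1 - x) ^ n) * hsign
    _ = 1 / (2 * n + a + 1) := by
        rw [integral_pow_mul_one_sub_pow, show n + a + n + 1 = 2 * n + a + 1 by ring,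
          Nat.factorial_succ]
        push_cast
        field_simp

theorem norm_Vz (p : ℕ) (q : ℤ) (z : ℂ) : ‖Vz p q z‖ = |Rz p q ‖z‖| := by
  rw [Vz, norm_mul, Complex.norm_exp, Complex.norm_real, Real.norm_eq_abs]
  simp [Complex.mul_re]

theorem stmt6 (p : ℕ) (q : ℤ) (h : Admissible p q) :
    ∫ z in Disc, ‖Vz p q z‖ ^ 2 = π / (p + 1) := by
  obtain ⟨n, rfl⟩ : ∃ n, p = 2 * n + q.natAbs := ⟨(p - q.natAbs) / 2, by
    obtain ⟨hle, heven⟩ := h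
    omega⟩
  have hV : ∀ z : ℂ, ‖Vz (2 * n + q.natAbs) q z‖ ^ 2 =
      (‖z‖ ^ 2) ^ q.natAbs * (zernikeRadialPoly n q.natAbs).eval (‖z‖ ^ 2) ^ 2 := by
    intro z
    rw [norm_Vz, sq_abs, Rz_eq_eval_zernikeRadialPoly]
    ring
  simp_rw [hV]
  rw [setIntegral_disc_comp_norm_sq (fun x => x ^ q.natAbs * (zernikeRadialPoly n q.natAbs).eval x ^ 2)
    (by fun_prop), integral_pow_mul_eval_zernikeRadialPoly_sq]
  push_cast
  field_simp
end
end
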